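/- Let G be a finite abelian group with |G| ≥ 3 and let S ⊆ G be such that the addition Cayley graph Cay⁺(G,S) is Hamiltonian. Then |S| ≥ rk(G). Moreover, if rk(2G) = rk(G), where 2G = {g + g : g ∈ G} (equivalently, if the smallest invariant factor m₁ of G satisfies m₁ > 2), then |S| ≥ rk(G) + 1. -/

import Mathlib

/-- A Hamiltonian cycle on a finite type `G` is a permutation of `G` which is a single
cycle whose support is all of `G`. -/
def IsHamCycle {G : Type*} [Fintype G] [DecidableEq G] (σ : Equiv.Perm G) : Prop :=
  σ.IsCycle ∧ σ.support = Finset.univ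

/-- The set `D(C)` of differences of consecutive elements along the Hamiltonian cycle
given by the permutation `σ`. -/
def cycleDiffs {G : Type*} [AddCommGroup G] [Fintype G] [DecidableEq G] [DecidableEq G]
    (σ : Equiv.Perm G) : Finset G :=
  Finset.image (fun g => σ g - g) Finset.univ

/-- The set `S(C)` of sums of consecutive elements along the Hamiltonian cycle
given by the permutation `σ`. -/
def cycleSums {G : Type*} [AddCommGroup G] [Fintype G] [DecidableEq G] [DecidableEq G]
    (σ : Equiv.Perm G) : Finset G :=
  Finset.image (fun g => g + σ g) Finset.univ

/-- The rank of an additive abelian group: the minimal cardinality of a generating set. -/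
noncomputable def addRank (G : Type*) [AddCommGroup G] : ℕ :=
  sInf {n : ℕ | ∃ S : Finset G, S.card = n ∧ AddSubgroup.closure (S : Set G) = ⊤}

/-- The addition Cayley graph `Cay⁺(G,S)`: distinct vertices `g, h` are adjacent
iff `g + h ∈ S`. -/
def addCayley (G : Type*) [AddCommGroup G] (S : Set G) : SimpleGraph G where
  Adj g h := g ≠ h ∧ g + h ∈ S
  symm := by
    refine ⟨?_⟩
    intro g h hgh
    exact ⟨hgh.1.symm, by rw [add_comm]; exact hgh.2⟩
  loopless := by
    refine ⟨?_⟩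
    intro g hg
    exact hg.1 rfl

/-- The subgroup `2G = {g + g : g ∈ G}` of `G`. -/
def twoSubgroup (G : Type*) [AddCommGroup G] : AddSubgroup G :=
  (AddMonoidHom.id G + AddMonoidHom.id G).range

lemma addRank_le_card {G : Type*} [AddCommGroup G] (U : Finset G)
    (h : AddSubgroup.closure (U : Set G) = ⊤) : addRank G ≤ U.card :=
  Nat.sInf_le ⟨U, rfl, h⟩

lemma exists_gen_card_le {G : Type*} [AddCommGroup G] (A : AddSubgroup G) (T : Finset G)
    (hA : A ≤ AddSubgroup.closure (T : Set G)) :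
    ∃ U : Finset G, U.card ≤ T.card ∧ ↑U ⊆ (A : Set G) ∧
      AddSubgroup.closure (U : Set G) = A := by
  classical
  set k := T.card with hk
  let t : Fin k → G := fun i => (T.equivFin.symm i : G)
  have ht : Set.range t = (T : Set G) := by
    ext x
    constructor
    · rintro ⟨i, rfl⟩; exact (T.equivFin.symm i).2
    · intro hx; exact ⟨T.equivFin ⟨x, hx⟩, by simp [t]⟩
  let b0 := Pi.basisFun ℤ (Fin k)
  let φ : (Fin k → ℤ) →ₗ[ℤ] G := b0.constr ℤ t
  have hrange : LinearMap.range φ = Submodule.span ℤ (T : Set G) := by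
    rw [Module.Basis.constr_range, ht]
  let A' : Submodule ℤ G := AddSubgroup.toIntSubmodule A
  have hA' : A' ≤ Submodule.span ℤ (T : Set G) := by
    intro x hx
    have hx' : x ∈ AddSubgroup.closure (T : Set G) := hA hx
    rwa [← Submodule.span_int_eq_addSubgroupClosure, Submodule.mem_toAddSubgroup] at hx'
  let P : Submodule ℤ (Fin k → ℤ) := A'.comap φ
  obtain ⟨n, bP⟩ := Submodule.basisOfPid b0 P
  have hn : n ≤ k := by
    have h1 : Module.finrank ℤ P = n := by
      rw [Module.finrank_eq_card_basis bP, Fintype.card_fin]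
    have h2 : Module.finrank ℤ (Fin k → ℤ) = k := by
      simp [Module.finrank_pi]
    calc n = Module.finrank ℤ P := h1.symm
    _ ≤ Module.finrank ℤ (Fin k → ℤ) := Submodule.finrank_le P
    _ = k := h2
  refine ⟨Finset.image (fun i => φ (bP i : Fin k → ℤ)) Finset.univ, ?_, ?_, ?_⟩
  · exact (Finset.card_image_le.trans (by simpa using hn))
  · intro x hx
    simp only [Finset.coe_image, Finset.coe_univ, Set.image_univ, Set.mem_range] at hx
    obtain ⟨i, rfl⟩ := hx
    exact (bP i).2
  · have hU : ((Finset.image (fun i => φ (bP i : Fin k → ℤ)) Finset.univ : Finset G) : Set G)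
        = Set.range (fun i => φ (bP i : Fin k → ℤ)) := by
      simp
    have hspan : Submodule.span ℤ (Set.range (fun i => φ (bP i : Fin k → ℤ))) = A' := by
      apply le_antisymm
      · rw [Submodule.span_le]
        rintro x ⟨i, rfl⟩
        exact (bP i).2
      · intro a ha
        have haT : a ∈ LinearMap.range φ := by rw [hrange]; exact hA' ha
        obtain ⟨c, rfl⟩ := haT
        have hc : c ∈ P := by simpa [P] using ha
        have hmem : (⟨c, hc⟩ : P) ∈ Submodule.span ℤ (Set.range bP) := by
          rw [bP.span_eq]; trivial
        have : φ c = (φ.comp P.subtype) ⟨c, hc⟩ := rfl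
        rw [this]
        have h2 := Submodule.mem_map_of_mem (f := φ.comp P.subtype) hmem
        rw [Submodule.map_span, ← Set.range_comp] at h2
        convert h2 using 2
        rfl
    rw [hU, ← Submodule.span_int_eq_addSubgroupClosure, hspan]
    ext x; simp [A']

lemma addRank_le_of_closure_eq {G : Type*} [AddCommGroup G] (A : AddSubgroup G) (U : Finset G)
    (hU : ↑U ⊆ (A : Set G)) (hcl : AddSubgroup.closure (U : Set G) = A) :
    addRank ↥A ≤ U.card := by
  classical
  let V : Finset ↥A := U.attach.map ⟨fun u => (⟨u.1, hU u.2⟩ : ↥A), by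
    intro a b h
    exact Subtype.ext (congrArg (fun x : ↥A => (x : G)) h)⟩
  have hVcard : V.card = U.card := by simp [V]
  have hV : AddSubgroup.closure (V : Set ↥A) = ⊤ := by
    apply AddSubgroup.map_injective A.subtype_injective
    have himg : (⇑A.subtype '' (V : Set ↥A)) = (U : Set G) := by
      ext x
      constructor
      · rintro ⟨y, hy, rfl⟩
        simp only [V, Finset.mem_coe, Finset.mem_map, Finset.mem_attach] at hy
        obtain ⟨u, -, rfl⟩ := hy
        exact u.2
      · intro hx
        refine ⟨⟨x, hU hx⟩, ?_, rfl⟩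
        simp only [V, Finset.mem_coe, Finset.mem_map, Finset.mem_attach]
        exact ⟨⟨x, hx⟩, trivial, rfl⟩
    rw [AddMonoidHom.map_closure, himg, hcl, ← AddMonoidHom.range_eq_map,
      AddSubgroup.range_subtype]
  exact hVcard ▸ Nat.sInf_le ⟨V, rfl, hV⟩

lemma two_classes {Q : Type*} [AddCommGroup Q] (q1 q2 : Q) (hcl : ∀ q : Q, q = q1 ∨ q = q2) :
    ∀ q : Q, q + q = 0 := by
  intro q
  by_cases h0 : q = 0
  · rw [h0, add_zero]
  have key : q + q = 0 ∨ q + q = q := by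
    rcases hcl 0 with h1 | h1 <;> rcases hcl q with h2 | h2 <;> rcases hcl (q + q) with h3 | h3 <;>
      first
        | (left; rw [h3, ← h1])
        | (right; rw [h3, ← h2])
        | (exact absurd (h2.trans h1.symm) h0)
  rcases key with h | h
  · exact h
  · exact absurd (add_eq_right.mp h) h0

theorem stmt9 (G : Type*) [AddCommGroup G] [Fintype G] [DecidableEq G]
    (hG : 3 ≤ Fintype.card G) (S : Finset G)
    (hS : (addCayley G ↑S).IsHamiltonian) :
    addRank G ≤ S.card ∧
      (addRank (twoSubgroup G) = addRank G → addRank G + 1 ≤ S.card) := by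
  classical
  obtain ⟨v, p, hp⟩ := hS (by omega)
  set n := p.length with hn
  have hn3 : 3 ≤ n := by rw [hn, hp.length_eq]; exact hG
  have hnpos : 0 < n := by omega
  set f : ℕ → G := fun i => p.getVert (i % n) with hf
  have hadj : ∀ i, (addCayley G ↑S).Adj (f i) (f (i + 1)) := by
    intro i
    have hi : i % n < n := Nat.mod_lt _ hnpos
    have key := p.adj_getVert_succ hi
    have h1 : (i + 1) % n = (i % n + 1) % n := by
      conv_lhs => rw [Nat.add_mod]
      rw [Nat.mod_eq_of_lt (show 1 < n by omega)]
    have hfeq : f (i + 1) = p.getVert (i % n + 1) := by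
      rcases eq_or_lt_of_le (Nat.succ_le_of_lt hi) with heq | hlt
      · have heq' : i % n + 1 = n := heq
        have h2 : (i + 1) % n = 0 := by rw [h1, heq', Nat.mod_self]
        show p.getVert ((i + 1) % n) = _
        rw [h2, p.getVert_zero, heq']
        exact (p.getVert_length).symm
      · have hlt' : i % n + 1 < n := hlt
        show p.getVert ((i + 1) % n) = _
        rw [h1, Nat.mod_eq_of_lt hlt']
    rw [hfeq]
    exact key
  have hs : ∀ i, f i + f (i + 1) ∈ S := fun i => (hadj i).2
  have hsurj : ∀ x : G, ∃ i, f i = x := by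
    intro x
    have hx := hp.mem_support x
    rw [SimpleGraph.Walk.mem_support_iff_exists_getVert] at hx
    obtain ⟨i, hgi, hile⟩ := hx
    rcases eq_or_lt_of_le hile with heq | hlt
    · refine ⟨0, ?_⟩
      show p.getVert (0 % n) = x
      rw [Nat.zero_mod, p.getVert_zero, ← hgi, heq]
      exact (p.getVert_length).symm
    · refine ⟨i, ?_⟩
      show p.getVert (i % n) = x
      rw [Nat.mod_eq_of_lt hlt, hgi]
  set s0 : G := f 0 + f 1 with hs0def
  have hs0 : s0 ∈ S := hs 0
  set T' : Finset G := (S.image (fun s => s - s0)).erase 0 with hT'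
  have hT'card : T'.card + 1 ≤ S.card := by
    have h0 : (0 : G) ∈ S.image (fun s => s - s0) :=
      Finset.mem_image.2 ⟨s0, hs0, sub_self s0⟩
    have h1 := Finset.card_erase_lt_of_mem h0
    rw [← hT'] at h1
    have h2 := Finset.card_image_le (s := S) (f := fun s => s - s0)
    omega
  set H : AddSubgroup G := AddSubgroup.closure (T' : Set G) with hH
  have hmemH : ∀ s ∈ S, s - s0 ∈ H := by
    intro s hsS
    by_cases h : s - s0 = 0
    · rw [h]; exact zero_mem H
    · exact AddSubgroup.subset_closure
        (Finset.mem_erase.2 ⟨h, Finset.mem_image.2 ⟨s, hsS, rfl⟩⟩)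
  have hstep : ∀ i, f (i + 2) - f i ∈ H := by
    intro i
    have e : f (i + 2) - f i = (f (i + 1) + f (i + 2) - s0) - (f i + f (i + 1) - s0) := by
      abel
    rw [e]
    exact sub_mem (hmemH _ (hs (i + 1))) (hmemH _ (hs i))
  have hpar : ∀ k, f (2 * k) - f 0 ∈ H ∧ f (2 * k + 1) + f 0 - s0 ∈ H := by
    intro k
    induction k with
    | zero =>
      constructor
      · simpa using zero_mem H
      · have e : f (2 * 0 + 1) + f 0 - s0 = 0 := by
          rw [hs0def]
          norm_num
          abel
        rw [e]; exact zero_mem H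
    | succ k ih =>
      constructor
      · have e : f (2 * (k + 1)) - f 0 = (f (2 * k + 2) - f (2 * k)) + (f (2 * k) - f 0) := by
          have : 2 * (k + 1) = 2 * k + 2 := by ring
          rw [this]; abel
        rw [e]
        exact add_mem (hstep (2 * k)) ih.1
      · have e : f (2 * (k + 1) + 1) + f 0 - s0
            = (f (2 * k + 1 + 2) - f (2 * k + 1)) + (f (2 * k + 1) + f 0 - s0) := by
          have : 2 * (k + 1) + 1 = 2 * k + 1 + 2 := by ring
          rw [this]; abel
        rw [e]
        exact add_mem (hstep (2 * k + 1)) ih.2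
  have hcover : ∀ x : G, x - f 0 ∈ H ∨ x - (s0 - f 0) ∈ H := by
    intro x
    obtain ⟨i, hi⟩ := hsurj x
    rcases Nat.even_or_odd i with ⟨k, hk⟩ | ⟨k, hk⟩
    · left
      have : i = 2 * k := by omega
      rw [← hi, this]
      exact (hpar k).1
    · right
      have : i = 2 * k + 1 := by omega
      have e : x - (s0 - f 0) = f (2 * k + 1) + f 0 - s0 := by
        rw [← hi, this]; abel
      rw [e]
      exact (hpar k).2
  set a : G := s0 - f 0 - f 0 with ha
  have hKtop : AddSubgroup.closure ((insert a T' : Finset G) : Set G) = ⊤ := by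
    rw [eq_top_iff]
    intro x _
    have hsub : H ≤ AddSubgroup.closure ((insert a T' : Finset G) : Set G) := by
      rw [hH]
      apply AddSubgroup.closure_mono
      intro y hy
      simp only [Finset.coe_insert, Set.mem_insert_iff]
      exact Or.inr hy
    have haK : a ∈ AddSubgroup.closure ((insert a T' : Finset G) : Set G) :=
      AddSubgroup.subset_closure (by simp)
    have h1 : ∀ y : G, y - f 0 ∈ AddSubgroup.closure ((insert a T' : Finset G) : Set G) := by
      intro y
      rcases hcover y with h | h
      · exact hsub h
      · have e : y - f 0 = (y - (s0 - f 0)) + a := by rw [ha]; abel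
        rw [e]
        exact add_mem (hsub h) haK
    have := h1 (x + f 0)
    simpa using this
  have claim1 : addRank G ≤ S.card := by
    have h1 := addRank_le_card (insert a T') hKtop
    have h2 := Finset.card_insert_le a T'
    omega
  refine ⟨claim1, ?_⟩
  intro hr
  have hcl : ∀ q : G ⧸ H, q = ((f 0 : G) : G ⧸ H) ∨ q = ((s0 - f 0 : G) : G ⧸ H) := by
    intro q
    induction q using QuotientAddGroup.induction_on with
    | H y =>
      rcases hcover y with h | h
      · exact Or.inl ((QuotientAddGroup.eq_iff_sub_mem).2 h)
      · exact Or.inr ((QuotientAddGroup.eq_iff_sub_mem).2 h)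
  have hq2 : ∀ x : G, x + x ∈ H := by
    intro x
    have h0 : ((x : G ⧸ H)) + ((x : G ⧸ H)) = 0 := two_classes _ _ hcl _
    have hmk : ((x + x : G) : G ⧸ H) = ((x : G ⧸ H)) + ((x : G ⧸ H)) := rfl
    exact (QuotientAddGroup.eq_zero_iff _).1 (hmk.trans h0)
  have h2G : twoSubgroup G ≤ H := by
    rintro x ⟨y, rfl⟩
    have he : (AddMonoidHom.id G + AddMonoidHom.id G) y = y + y := rfl
    rw [he]
    exact hq2 y
  obtain ⟨U, hUc, hUsub, hUcl⟩ := exists_gen_card_le (twoSubgroup G) T' (hH ▸ h2G)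
  have hle := addRank_le_of_closure_eq (twoSubgroup G) U hUsub hUcl
  rw [hr] at hle
  omega
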